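/- arXiv:math/0503634 — 3 statements merged into one kernel-verified Lean document; each statement's English description precedes it below -/
import Mathlib

section
/- Let φ: ℝ^d → ℝ be topical. The map ψ: ℝ^d → ℝ × (ℝ^d/~), x ↦ (φ(x), x̄), is a bijection, and both ψ and its inverse are Lipschitz (with respect to the sup norm on ℝ^d and the metric max(|t-s|, δ) on the product). -/
/-- For a topical `φ : ℝ^d → ℝ`, the map `ψ : x ↦ (φ(x), x̄)` into
`ℝ × (ℝ^d/ℝ·1)` is a bijection, and `ψ` and `ψ⁻¹` are Lipschitz for the sup norm
on `ℝ^d` and the metric `max(|t-s|, δ)` on the product.  This is expressed without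
forming the quotient: `ψ` injective means `φ x = φ y` and `x ~ y` imply `x = y`;
`ψ` surjective means every `(t, ȳ)` is hit; and there is a constant `K > 0`
with `max (|φ x - φ y|) (δ x y) ≤ K‖x-y‖` and `‖x-y‖ ≤ K * max (|φ x - φ y|) (δ x y)`. -/
theorem topical_pair_bijective_bilipschitz {d : ℕ} (hd : 0 < d)
    (φ : (Fin d → ℝ) → ℝ)
    (hiso : ∀ x y : Fin d → ℝ, x ≤ y → φ x ≤ φ y)
    (hhom : ∀ (x : Fin d → ℝ) (a : ℝ), φ (fun i => x i + a) = φ x + a)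
    (δ : (Fin d → ℝ) → (Fin d → ℝ) → ℝ)
    (hδ : ∀ x y : Fin d → ℝ, δ x y =
      Finset.univ.sup' (Finset.univ_nonempty_iff.mpr (Fin.pos_iff_nonempty.mp hd))
          (fun i => x i - y i)
        + Finset.univ.sup' (Finset.univ_nonempty_iff.mpr (Fin.pos_iff_nonempty.mp hd))
          (fun i => y i - x i)) :
    (∀ x y : Fin d → ℝ, φ x = φ y → (∃ a : ℝ, x = fun i => y i + a) → x = y) ∧
    (∀ (t : ℝ) (y : Fin d → ℝ), ∃ x : Fin d → ℝ,
      φ x = t ∧ ∃ a : ℝ, x = fun i => y i + a) ∧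
    (∃ K : ℝ, 0 < K ∧ ∀ x y : Fin d → ℝ,
      max (|φ x - φ y|) (δ x y) ≤ K * ‖x - y‖ ∧
      ‖x - y‖ ≤ K * max (|φ x - φ y|) (δ x y)) := by
  have hne : (Finset.univ : Finset (Fin d)).Nonempty :=
    Finset.univ_nonempty_iff.mpr (Fin.pos_iff_nonempty.mp hd)
  refine ⟨?_, ?_, ?_⟩
  · rintro x y hφ ⟨a, rfl⟩
    have := hhom y a
    rw [hφ] at this
    have ha : a = 0 := by linarith
    funext i; simp [ha]
  · intro t y
    refine ⟨fun i => y i + (t - φ y), ?_, ⟨t - φ y, rfl⟩⟩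
    rw [hhom]; ring
  · refine ⟨2, by norm_num, fun x y => ?_⟩
    set M := Finset.univ.sup' hne (fun i => x i - y i) with hM
    set m := Finset.univ.sup' hne (fun i => y i - x i) with hm
    -- basic coordinate bounds
    have hMle : ∀ i, x i - y i ≤ M := fun i =>
      Finset.le_sup' (fun i => x i - y i) (Finset.mem_univ i)
    have hmle : ∀ i, y i - x i ≤ m := fun i =>
      Finset.le_sup' (fun i => y i - x i) (Finset.mem_univ i)
    -- φ bounds: φ x - φ y ≤ M and φ y - φ x ≤ m
    have h1 : φ x ≤ φ y + M := by
      have : φ x ≤ φ (fun i => y i + M) := hiso _ _ (fun i => by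
        have := hMle i; dsimp; linarith)
      rwa [hhom] at this
    have h2 : φ y ≤ φ x + m := by
      have : φ y ≤ φ (fun i => x i + m) := hiso _ _ (fun i => by
        have := hmle i; dsimp; linarith)
      rwa [hhom] at this
    have hnorm : ∀ i, |x i - y i| ≤ ‖x - y‖ := fun i => by
      have := norm_le_pi_norm (x - y) i
      simpa using this
    have hnormge : ∀ i, x i - y i ≤ ‖x - y‖ ∧ y i - x i ≤ ‖x - y‖ := fun i => by
      have := hnorm i
      constructor <;> [linarith [le_abs_self (x i - y i)];
        linarith [neg_abs_le (x i - y i)]]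
    -- M ≤ ‖x-y‖ and m ≤ ‖x-y‖
    have hMn : M ≤ ‖x - y‖ := by
      apply Finset.sup'_le; intro i _; exact (hnormge i).1
    have hmn : m ≤ ‖x - y‖ := by
      apply Finset.sup'_le; intro i _; exact (hnormge i).2
    have habs : |φ x - φ y| ≤ ‖x - y‖ := by
      rw [abs_le]; constructor <;> linarith
    have hnn : (0:ℝ) ≤ ‖x - y‖ := norm_nonneg _
    constructor
    · rw [hδ]
      apply max_le
      · linarith
      · linarith
    · -- reverse inequality
      have habs2 : -m ≤ φ x - φ y ∧ φ x - φ y ≤ M := ⟨by linarith, by linarith⟩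
      have hkey : ∀ i, |x i - y i| ≤ (M + m) + |φ x - φ y| := by
        intro i
        have h3 : -m ≤ |φ x - φ y| := le_trans habs2.1 (le_abs_self _)
        have h4 : -M ≤ |φ x - φ y| := by
          have : φ y - φ x ≥ -M := by linarith
          calc -M ≤ φ y - φ x := by linarith
            _ ≤ |φ y - φ x| := le_abs_self _
            _ = |φ x - φ y| := abs_sub_comm _ _
        rw [abs_le]
        have := hMle i; have := hmle i
        constructor <;> linarith
      have hbound : ‖x - y‖ ≤ (M + m) + |φ x - φ y| := by
        have hnn2 : (0:ℝ) ≤ (M + m) + |φ x - φ y| := by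
          have := hkey ⟨0, hd⟩
          have := abs_nonneg (x ⟨0, hd⟩ - y ⟨0, hd⟩)
          linarith
        apply pi_norm_le_iff_of_nonneg hnn2 |>.mpr
        intro i
        have := hkey i
        simpa using this
      rw [hδ]
      have hle1 : M + m ≤ max (|φ x - φ y|) (M + m) := le_max_right _ _
      have hle2 : |φ x - φ y| ≤ max (|φ x - φ y|) (M + m) := le_max_left _ _
      linarith
end

section
/- Fix real numbers a, b and a set S of topical operators on ℝ^d; let T be the semigroup generated by S. Suppose some rank-1 operator θ₁ ∈ T satisfies: for all A ∈ S and all rank-1 θ' ∈ T, (θ₁Aθ' - θ₁θ')(ℝ^d) ⊆ (a + bℤ)·1. Then every rank-1 operator θ₂ ∈ T satisfies the same property: for all A ∈ S and rank-1 θ' ∈ T, (θ₂Aθ' - θ₂θ')(ℝ^d) ⊆ (a + bℤ)·1. -/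
/-- A map `ℝ^d → ℝ^d` is topical if it is isotone and additively homogeneous. -/
def Topical {d : ℕ} (A : (Fin d → ℝ) → (Fin d → ℝ)) : Prop :=
  (∀ x y : Fin d → ℝ, x ≤ y → A x ≤ A y) ∧
  ∀ (x : Fin d → ℝ) (a : ℝ), A (fun i => x i + a) = fun i => A x i + a

/-- A topical operator has rank 1 if its induced map on `ℝ^d/ℝ·1` is constant. -/
def Rank1 {d : ℕ} (A : (Fin d → ℝ) → (Fin d → ℝ)) : Prop :=
  ∀ x y : Fin d → ℝ, ∃ a : ℝ, A x = fun i => A y i + a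

/-- Membership in the semigroup generated (under composition) by a set of maps. -/
inductive InSemigroup {α : Type*} (S : Set (α → α)) : (α → α) → Prop
  | base {A : α → α} : A ∈ S → InSemigroup S A
  | comp {A B : α → α} : InSemigroup S A → InSemigroup S B → InSemigroup S (A ∘ B)

/-- Every member of the semigroup generated by topical maps is topical. -/
lemma topical_of_inSemigroup {d : ℕ} {S : Set ((Fin d → ℝ) → (Fin d → ℝ))}
    (hS : ∀ A ∈ S, Topical A) {F : (Fin d → ℝ) → (Fin d → ℝ)}
    (hF : InSemigroup S F) : Topical F := by
  induction hF with
  | base h => exact hS _ h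
  | comp _ _ ihA ihB =>
    refine ⟨fun x y hxy => ihA.1 _ _ (ihB.1 _ _ hxy), fun x c => ?_⟩
    show _ = _
    simp only [Function.comp_apply, ihB.2 x c, ihA.2 (_) c]

/-- Composing a rank-1 map with a topical map on the left is rank 1. -/
lemma rank1_comp {d : ℕ} {F θ : (Fin d → ℝ) → (Fin d → ℝ)}
    (hF : Topical F) (hθ : Rank1 θ) : Rank1 (F ∘ θ) := by
  intro x y
  obtain ⟨c, hc⟩ := hθ x y
  refine ⟨c, ?_⟩
  show F (θ x) = fun i => F (θ y) i + c
  rw [hc, hF.2]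

/-- Key telescoping lemma: for any `F` in the semigroup there is `n` such that
`θ₁ F θ' - θ₁ θ'` takes values in `((n+1)a + bℤ)·1` for all rank-1 `θ'` in `T`. -/
lemma key_lemma {d : ℕ} (a b : ℝ) (S : Set ((Fin d → ℝ) → (Fin d → ℝ)))
    (hS : ∀ A ∈ S, Topical A)
    (θ₁ : (Fin d → ℝ) → (Fin d → ℝ))
    (h₁ : ∀ A ∈ S, ∀ θ' : (Fin d → ℝ) → (Fin d → ℝ), InSemigroup S θ' → Rank1 θ' →
      ∀ x : Fin d → ℝ, ∃ k : ℤ, θ₁ (A (θ' x)) = fun i => θ₁ (θ' x) i + (a + b * k))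
    {F : (Fin d → ℝ) → (Fin d → ℝ)} (hF : InSemigroup S F) :
    ∃ n : ℕ, ∀ θ' : (Fin d → ℝ) → (Fin d → ℝ), InSemigroup S θ' → Rank1 θ' →
      ∀ x : Fin d → ℝ, ∃ k : ℤ,
        θ₁ (F (θ' x)) = fun i => θ₁ (θ' x) i + ((n + 1) * a + b * k) := by
  induction hF with
  | base h =>
    refine ⟨0, fun θ' hθ'T hθ' x => ?_⟩
    obtain ⟨k, hk⟩ := h₁ _ h θ' hθ'T hθ' x
    exact ⟨k, by rw [hk]; funext i; push_cast; ring⟩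
  | @comp A B hA hB ihA ihB =>
    obtain ⟨nA, hnA⟩ := ihA
    obtain ⟨nB, hnB⟩ := ihB
    refine ⟨nA + nB + 1, fun θ' hθ'T hθ' x => ?_⟩
    have hBθ'T : InSemigroup S (B ∘ θ') := InSemigroup.comp hB hθ'T
    have hBθ' : Rank1 (B ∘ θ') :=
      rank1_comp (topical_of_inSemigroup hS hB) hθ'
    obtain ⟨k₁, hk₁⟩ := hnA (B ∘ θ') hBθ'T hBθ' x
    obtain ⟨k₂, hk₂⟩ := hnB θ' hθ'T hθ' x
    refine ⟨k₁ + k₂, ?_⟩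
    show θ₁ (A (B (θ' x))) = _
    have h1 : θ₁ (A (B (θ' x))) = fun i => θ₁ (B (θ' x)) i + ((nA + 1) * a + b * k₁) := hk₁
    rw [h1, hk₂]
    funext i
    push_cast
    ring

/-- If one rank-1 operator `θ₁` of the semigroup `T` generated by `S` satisfies
`(θ₁Aθ' - θ₁θ')(ℝ^d) ⊆ (a + bℤ)·1` for all `A ∈ S` and rank-1 `θ' ∈ T`, then every
rank-1 operator `θ₂ ∈ T` satisfies the same property. -/
theorem arithmetic_rank1_invariant {d : ℕ} (a b : ℝ)
    (S : Set ((Fin d → ℝ) → (Fin d → ℝ)))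
    (hS : ∀ A ∈ S, Topical A)
    (θ₁ : (Fin d → ℝ) → (Fin d → ℝ))
    (hθ₁T : InSemigroup S θ₁) (hθ₁ : Rank1 θ₁)
    (h₁ : ∀ A ∈ S, ∀ θ' : (Fin d → ℝ) → (Fin d → ℝ), InSemigroup S θ' → Rank1 θ' →
      ∀ x : Fin d → ℝ, ∃ k : ℤ, θ₁ (A (θ' x)) = fun i => θ₁ (θ' x) i + (a + b * k)) :
    ∀ θ₂ : (Fin d → ℝ) → (Fin d → ℝ), InSemigroup S θ₂ → Rank1 θ₂ →
      ∀ A ∈ S, ∀ θ' : (Fin d → ℝ) → (Fin d → ℝ), InSemigroup S θ' → Rank1 θ' →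
      ∀ x : Fin d → ℝ, ∃ k : ℤ, θ₂ (A (θ' x)) = fun i => θ₂ (θ' x) i + (a + b * k) := by
  intro θ₂ hθ₂T hθ₂ A hA θ' hθ'T hθ' x
  rcases Nat.eq_zero_or_pos d with hd | hd
  · subst hd
    exact ⟨0, funext fun i => i.elim0⟩
  -- c is the (scalar) difference θ₂(Aθ'x) - θ₂(θ'x), since θ₂ is rank 1
  obtain ⟨c, hc⟩ := hθ₂ (A (θ' x)) (θ' x)
  obtain ⟨n, hn⟩ := key_lemma a b S hS θ₁ h₁ hθ₂T
  -- θ₁ θ₂ (A θ' x) = θ₁ (A θ' x) + ((n+1)a + b k₁)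
  have hAθ'T : InSemigroup S (A ∘ θ') := InSemigroup.comp (InSemigroup.base hA) hθ'T
  have hAθ' : Rank1 (A ∘ θ') := rank1_comp (hS A hA) hθ'
  obtain ⟨k₁, hk₁⟩ := hn (A ∘ θ') hAθ'T hAθ' x
  -- θ₁ (A θ' x) = θ₁ (θ' x) + (a + b k₀)
  obtain ⟨k₀, hk₀⟩ := h₁ A hA θ' hθ'T hθ' x
  -- θ₁ θ₂ (θ' x) = θ₁ (θ' x) + ((n+1)a + b k₂)
  obtain ⟨k₂, hk₂⟩ := hn θ' hθ'T hθ' x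
  -- apply θ₁ (additively homogeneous) to hc
  have hθ₁top : Topical θ₁ := topical_of_inSemigroup hS hθ₁T
  have hc' : θ₁ (θ₂ (A (θ' x))) = fun i => θ₁ (θ₂ (θ' x)) i + c := by
    rw [hc, hθ₁top.2]
  -- evaluate everything at index 0
  set i₀ : Fin d := ⟨0, hd⟩
  have hk₁' : θ₁ (θ₂ (A (θ' x))) i₀ = θ₁ (A (θ' x)) i₀ + ((n + 1) * a + b * k₁) :=
    congrFun hk₁ i₀
  have hk₀' : θ₁ (A (θ' x)) i₀ = θ₁ (θ' x) i₀ + (a + b * k₀) := congrFun hk₀ i₀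
  have hk₂' : θ₁ (θ₂ (θ' x)) i₀ = θ₁ (θ' x) i₀ + ((n + 1) * a + b * k₂) := congrFun hk₂ i₀
  have hc'' : θ₁ (θ₂ (A (θ' x))) i₀ = θ₁ (θ₂ (θ' x)) i₀ + c := congrFun hc' i₀
  have hcval : c = a + b * (k₁ + k₀ - k₂) := by linarith
  exact ⟨k₁ + k₀ - k₂, by rw [hc, hcval]; funext i; push_cast; ring⟩
end

section
/- Let A be a d×d matrix over ℝ ∪ {-∞} with no row of -∞, and suppose ρ_max(A) ≤ 0, where ρ_max(A) is the maximum average weight of an elementary circuit of the graph of A. Then for all n ≥ d and all x ∈ ℝ^d: max_i (A^{⊗n} x)_i ≤ (n-d)·ρ_max(A) + d·max_{A_{ij} > -∞} |A_{ij}| + max_i x_i. -/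
/-- The `(max,+)` matrix product over the semiring `(ℝ ∪ {-∞}, max, +)`. -/
def mpMul {d : ℕ} (A B : Fin d → Fin d → WithBot ℝ) : Fin d → Fin d → WithBot ℝ :=
  fun i j => Finset.univ.sup (fun p => A i p + B p j)

/-- The `n`-th `(max,+)` power of a matrix. -/
def mpPow {d : ℕ} (A : Fin d → Fin d → WithBot ℝ) : ℕ → Fin d → Fin d → WithBot ℝ
  | 0 => fun i j => if i = j then (0 : WithBot ℝ) else ⊥
  | n + 1 => mpMul A (mpPow A n)

/-- `p : Fin (c+1) → Fin d` is an elementary circuit of the graph of `A`: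
a closed path of positive length along finite entries of `A`, visiting no node twice. -/
def IsElemCircuit {d : ℕ} (A : Fin d → Fin d → WithBot ℝ) (c : ℕ)
    (p : Fin (c + 1) → Fin d) : Prop :=
  0 < c ∧ p 0 = p (Fin.last c) ∧
  (∀ k : Fin c, A (p k.castSucc) (p k.succ) ≠ ⊥) ∧
  Function.Injective (fun k : Fin c => p k.castSucc)

/-- The set of average weights of elementary circuits of `A`;
`ρ_max(A)` is its supremum (its maximum, the set being finite and nonempty). -/
def circuitAvgWeights {d : ℕ} (A : Fin d → Fin d → WithBot ℝ) : Set ℝ :=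
  {r : ℝ | ∃ (c : ℕ) (p : Fin (c + 1) → Fin d), IsElemCircuit A c p ∧
    r = (∑ k : Fin c, WithBot.unbotD 0 (A (p k.castSucc) (p k.succ))) / c}

/-!
Entries of `A^{⊗n}` are maxima of weights of walks of length `n`. A walk that repeats a node
contains an elementary circuit, of weight at most its length times `ρ_max(A)`; cutting it out leaves
a shorter walk. Repeating this reduces any walk to one without repeated nodes, hence of some length
`m < d`, whose arcs weigh at most `M` each. Since `ρ_max(A) ≤ M`, trading the `d - m` missing arcs
of weight `M` for circuit arcs gives the bound `(n - d) ρ_max(A) + d M`.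
-/

open Finset

section Walks

variable {d : ℕ} (A : Fin d → Fin d → WithBot ℝ)

/-- `f 0, f 1, …, f n` is a walk in the graph of `A`; the values of `f` beyond `n` play no role. -/
def IsWalk (n : ℕ) (f : ℕ → Fin d) : Prop :=
  ∀ k < n, A (f k) (f (k + 1)) ≠ ⊥

def walkWeight (n : ℕ) (f : ℕ → Fin d) : ℝ :=
  ∑ k ∈ range n, (A (f k) (f (k + 1))).unbotD 0

variable {A}

lemma walkWeight_add (m n : ℕ) (f : ℕ → Fin d) :
    walkWeight A (m + n) f = walkWeight A m f + walkWeight A n (fun k => f (m + k)) :=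
  sum_range_add _ m n

lemma walkWeight_congr {n : ℕ} {f g : ℕ → Fin d} (h : ∀ k ≤ n, f k = g k) :
    walkWeight A n f = walkWeight A n g :=
  sum_congr rfl fun k hk => by
    rw [mem_range] at hk
    rw [h k hk.le, h (k + 1) hk]

lemma walkWeight_le_mul {M : ℝ} (hM : ∀ i j, A i j ≠ ⊥ → (A i j).unbotD 0 ≤ M)
    {n : ℕ} {f : ℕ → Fin d} (hf : IsWalk A n f) : walkWeight A n f ≤ n * M := by
  have := sum_le_card_nsmul (range n) _ M fun k hk => hM _ _ (hf k (mem_range.mp hk))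
  simpa [walkWeight] using this

lemma mpPow_le_of_forall_walkWeight_le {n : ℕ} {i j : Fin d} {B : ℝ}
    (h : ∀ f : ℕ → Fin d, f 0 = i → f n = j → IsWalk A n f → walkWeight A n f ≤ B) :
    mpPow A n i j ≤ B := by
  induction n generalizing i B with
  | zero =>
    by_cases hij : i = j
    · subst hij
      simpa [mpPow, walkWeight] using h (fun _ => i) rfl rfl (by simp [IsWalk])
    · simp [mpPow, hij]
  | succ n ih =>
    simp only [mpPow, mpMul]
    refine Finset.sup_le fun p _ => ?_
    cases hip : A i p with
    | bot => simp
    | coe a =>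
      -- prepend the arc `i → p` to the walks of length `n` starting at `p`
      have hp : mpPow A n p j ≤ ((B - a : ℝ) : WithBot ℝ) := ih fun f hf0 hfn hf => by
        let g : ℕ → Fin d := fun | 0 => i | k + 1 => f k
        have hg : IsWalk A (n + 1) g := by
          rintro (_ | k) hk
          · simp [g, hf0, hip]
          · exact hf k (by omega)
        have := h g rfl hfn hg
        rw [walkWeight, sum_range_succ'] at this
        simp only [g, hf0, hip, WithBot.unbotD_coe] at this
        rw [walkWeight]
        linarith
      calc (a : WithBot ℝ) + mpPow A n p j ≤ (a : WithBot ℝ) + ((B - a : ℝ) : WithBot ℝ) :=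
            add_le_add le_rfl hp
        _ = B := by rw [← WithBot.coe_add, add_sub_cancel]

lemma lt_of_injOn_Iic {n : ℕ} {f : ℕ → Fin d} (hf : Set.InjOn f (Set.Iic n)) : n < d := by
  have := card_le_card_of_injOn f (t := univ) (fun _ _ => mem_univ _)
    (by rwa [coe_Iic] : Set.InjOn f (Finset.Iic n : Finset ℕ))
  simpa using this

/-- Cutting the closed subwalk `f a, …, f (a + c)` out of a walk. -/
lemma exists_walkWeight_eq_add_of_eq {a c t : ℕ} {f : ℕ → Fin d}
    (hf : IsWalk A (a + c + t) f) (hfa : f a = f (a + c)) :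
    ∃ g, IsWalk A (a + t) g ∧
      walkWeight A (a + c + t) f =
        walkWeight A (a + t) g + walkWeight A c (fun k => f (a + k)) := by
  let g : ℕ → Fin d := fun k => if k ≤ a then f k else f (k + c)
  have hg_le : ∀ k ≤ a, g k = f k := fun k hk => if_pos hk
  have hg_shift : ∀ k, g (a + k) = f (a + c + k) := by
    rintro (_ | k)
    · simp [g, hfa]
    · simp only [g, if_neg (show ¬ a + (k + 1) ≤ a by omega)]
      congr 1
      omega
  refine ⟨g, fun k hk => ?_, ?_⟩
  · rcases lt_or_ge k a with hka | hka
    · rw [hg_le k hka.le, hg_le (k + 1) hka]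
      exact hf k (by omega)
    · obtain ⟨l, rfl⟩ := Nat.exists_eq_add_of_le hka
      rw [hg_shift, show a + l + 1 = a + (l + 1) from rfl, hg_shift]
      exact hf (a + c + l) (by omega)
  · rw [walkWeight_add (a + c) t, walkWeight_add a c, walkWeight_add a t, walkWeight_congr hg_le]
    simp only [hg_shift]
    ring

lemma exists_first_repeat {n : ℕ} {f : ℕ → Fin d} (hf : ¬ Set.InjOn f (Set.Iic n)) :
    ∃ a c t, n = a + c + t ∧ 0 < c ∧ f a = f (a + c) ∧
      Set.InjOn (fun k => f (a + k)) (Set.Iio c) := by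
  classical
  have hrep : ∃ b, b ≤ n ∧ ∃ a < b, f a = f b := by
    simp only [Set.InjOn, Set.mem_Iic, not_forall] at hf
    obtain ⟨k, hk, l, hl, hkl, hne⟩ := hf
    rcases Nat.lt_or_gt_of_ne hne with h | h
    · exact ⟨l, hl, k, h, hkl⟩
    · exact ⟨k, hk, l, h, hkl.symm⟩
  obtain ⟨hbn, a, hab, hfa⟩ := Nat.find_spec hrep
  have hmin := fun b hb => Nat.find_min hrep (m := b) hb
  refine ⟨a, Nat.find hrep - a, n - Nat.find hrep, by omega, by omega,
    by rwa [Nat.add_sub_cancel' hab.le], fun k hk l hl hkl => ?_⟩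
  simp only [Set.mem_Iio] at hk hl
  by_contra hne
  rcases Nat.lt_or_gt_of_ne hne with h | h
  · exact hmin (a + l) (by omega) ⟨by omega, a + k, by omega, hkl⟩
  · exact hmin (a + k) (by omega) ⟨by omega, a + l, by omega, hkl.symm⟩

lemma walkWeight_div_mem_circuitAvgWeights {c : ℕ} {f : ℕ → Fin d} (hc : 0 < c)
    (hf : IsWalk A c f) (hclosed : f 0 = f c) (hinj : Set.InjOn f (Set.Iio c)) :
    walkWeight A c f / c ∈ circuitAvgWeights A := by
  refine ⟨c, fun k => f k, ⟨hc, hclosed, fun k => hf k k.isLt, fun k l hkl => ?_⟩, ?_⟩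
  · exact Fin.ext (hinj k.isLt l.isLt hkl)
  · simp only [Fin.val_castSucc, Fin.val_succ]
    rw [walkWeight, ← Fin.sum_univ_eq_sum_range (fun k => (A (f k) (f (k + 1))).unbotD 0)]

lemma circuitAvgWeights_le {M : ℝ} (hM : ∀ i j, A i j ≠ ⊥ → (A i j).unbotD 0 ≤ M) :
    ∀ w ∈ circuitAvgWeights A, w ≤ M := by
  rintro _ ⟨c, p, ⟨hc, -, hp, -⟩, rfl⟩
  rw [div_le_iff₀ (Nat.cast_pos.mpr hc)]
  simpa [mul_comm] using sum_le_card_nsmul univ _ M fun k _ => hM _ _ (hp k)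

/-- The circuit decomposition: a walk of length `n` splits into circuits and at most
`m < d` further arcs. -/
theorem exists_walkWeight_le {r M : ℝ} (hr : r ∈ upperBounds (circuitAvgWeights A))
    (hM : ∀ i j, A i j ≠ ⊥ → (A i j).unbotD 0 ≤ M) {n : ℕ} {f : ℕ → Fin d} (hf : IsWalk A n f) :
    ∃ m < d, walkWeight A n f ≤ (n - m) * r + m * M := by
  induction n using Nat.strong_induction_on generalizing f with
  | _ n ih =>
  by_cases hinj : Set.InjOn f (Set.Iic n)
  · exact ⟨n, lt_of_injOn_Iic hinj, by simpa using walkWeight_le_mul hM hf⟩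
  obtain ⟨a, c, t, rfl, hc, hfa, hinj⟩ := exists_first_repeat hinj
  obtain ⟨g, hg, hfg⟩ := exists_walkWeight_eq_add_of_eq hf hfa
  obtain ⟨m, hm, hgm⟩ := ih (a + t) (by omega) hg
  have hcirc : walkWeight A c (fun k => f (a + k)) ≤ c * r := by
    have := hr (walkWeight_div_mem_circuitAvgWeights hc (fun k hk => hf (a + k) (by omega))
      (by simpa using hfa) hinj)
    rwa [div_le_iff₀ (Nat.cast_pos.mpr hc), mul_comm] at this
  refine ⟨m, hm, ?_⟩
  rw [hfg]
  push_cast at hgm ⊢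
  linarith

end Walks

theorem mpPow_apply_max_upper_bound_general {d : ℕ} (hd : 0 < d)
    (A : Fin d → Fin d → WithBot ℝ)
    (M : ℝ) (hM : ∀ i j, A i j ≠ ⊥ → |WithBot.unbotD 0 (A i j)| ≤ M)
    (n : ℕ) (hn : d ≤ n) (x : Fin d → ℝ) :
    Finset.univ.sup (fun i => Finset.univ.sup (fun j => mpPow A n i j + (x j : WithBot ℝ)))
      ≤ ((((n - d : ℕ) : ℝ) * sSup (circuitAvgWeights A) + d * M +
          Finset.univ.sup' (Finset.univ_nonempty_iff.mpr (Fin.pos_iff_nonempty.mp hd)) x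
          : ℝ) : WithBot ℝ) := by
  set ρ := sSup (circuitAvgWeights A)
  have hM' : ∀ i j, A i j ≠ ⊥ → (A i j).unbotD 0 ≤ M :=
    fun i j h => (le_abs_self _).trans (hM i j h)
  have hρ : ρ ∈ upperBounds (circuitAvgWeights A) :=
    fun _ hw => le_csSup ⟨M, circuitAvgWeights_le hM'⟩ hw
  have hpow : ∀ i j, mpPow A n i j ≤ (((n - d : ℕ) : ℝ) * ρ + d * M : ℝ) := by
    refine fun i j => mpPow_le_of_forall_walkWeight_le fun f _ _ hf => ?_
    -- `sSup ∅ = 0`, so `ρ ≤ M` needs `0 ≤ M`, which the first arc of the walk provides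
    have hM0 : 0 ≤ M := (abs_nonneg _).trans (hM _ _ (hf 0 (by omega)))
    have hρM : ρ ≤ M := Real.sSup_le (circuitAvgWeights_le hM') hM0
    obtain ⟨m, hm, hfm⟩ := exists_walkWeight_le hρ hM' hf
    have hdm : (m : ℝ) ≤ d := by exact_mod_cast hm.le
    calc walkWeight A n f ≤ (n - m) * ρ + m * M := hfm
      _ = ((n - d : ℕ) : ℝ) * ρ + d * M - (d - m) * (M - ρ) := by rw [Nat.cast_sub hn]; ring
      _ ≤ ((n - d : ℕ) : ℝ) * ρ + d * M := sub_le_self _ (mul_nonneg (by linarith) (by linarith))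
  refine Finset.sup_le fun i _ => Finset.sup_le fun j _ => ?_
  rw [WithBot.coe_add]
  exact add_le_add (hpow i j) (WithBot.coe_le_coe.mpr (Finset.le_sup' x (Finset.mem_univ j)))

/-- If `A` has no row of `-∞` and `ρ_max(A) ≤ 0`, then for all `n ≥ d` and `x ∈ ℝ^d`,
`max_i (A^{⊗n} x)_i ≤ (n-d)·ρ_max(A) + d·max_{A_{ij} ≠ -∞} |A_{ij}| + max_i x_i`
(stated for any upper bound `M` of the finite entries' absolute values). -/
theorem mpPow_apply_max_upper_bound {d : ℕ} (hd : 0 < d)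
    (A : Fin d → Fin d → WithBot ℝ) (hA : ∀ i, ∃ j, A i j ≠ ⊥)
    (hρ : sSup (circuitAvgWeights A) ≤ 0)
    (M : ℝ) (hM : ∀ i j, A i j ≠ ⊥ → |WithBot.unbotD 0 (A i j)| ≤ M)
    (n : ℕ) (hn : d ≤ n) (x : Fin d → ℝ) :
    Finset.univ.sup (fun i => Finset.univ.sup (fun j => mpPow A n i j + (x j : WithBot ℝ)))
      ≤ ((((n - d : ℕ) : ℝ) * sSup (circuitAvgWeights A) + d * M +
          Finset.univ.sup' (Finset.univ_nonempty_iff.mpr (Fin.pos_iff_nonempty.mp hd)) x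
          : ℝ) : WithBot ℝ) :=
  mpPow_apply_max_upper_bound_general hd A M hM n hn x
end
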